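/- Let B ⊆ ℝⁿ be a compact set, H ⊆ B a compact set, and let (μ_j) and μ be nonzero finite Borel measures on ℝⁿ, all supported in B, such that μ_j converges to μ weakly (∫ f dμ_j → ∫ f dμ for every bounded continuous f). Suppose there exist ε_j → 0 such that spt μ_j ⊆ { y ∈ ℝⁿ : dist(y, spt μ ∪ H) < ε_j } for every j. Then the Hausdorff distance d_H(spt μ_j ∪ H, spt μ ∪ H) tends to 0 as j → ∞. -/
import Mathlib


open MeasureTheory Metric Filter Topology BoundedContinuousFunction

/-- The support of a Borel measure on `ℝⁿ`: the smallest closed set whose complement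
is `μ`-null, i.e. the complement of the union of all open `μ`-null sets. -/
def measSupport {n : ℕ} (μ : Measure (EuclideanSpace ℝ (Fin n))) :
    Set (EuclideanSpace ℝ (Fin n)) :=
  (⋃₀ {U : Set (EuclideanSpace ℝ (Fin n)) | IsOpen U ∧ μ U = 0})ᶜ

lemma isClosed_measSupport {n : ℕ} (μ : Measure (EuclideanSpace ℝ (Fin n))) :
    IsClosed (measSupport μ) :=
  (isOpen_sUnion fun _ hU => hU.1).isClosed_compl

lemma measSupport_measure_ne_zero {n : ℕ} {μ : Measure (EuclideanSpace ℝ (Fin n))}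
    {x : EuclideanSpace ℝ (Fin n)} {G : Set (EuclideanSpace ℝ (Fin n))}
    (hx : x ∈ measSupport μ) (hG : IsOpen G) (hxG : x ∈ G) : μ G ≠ 0 :=
  fun h => hx (Set.mem_sUnion.2 ⟨G, ⟨hG, h⟩, hxG⟩)

lemma measure_compl_measSupport {n : ℕ} (μ : Measure (EuclideanSpace ℝ (Fin n))) :
    μ (measSupport μ)ᶜ = 0 := by
  rw [measSupport, compl_compl]
  obtain ⟨T, hTsub, hTc, hTeq⟩ :=
    TopologicalSpace.isOpen_sUnion_countable
      {U : Set (EuclideanSpace ℝ (Fin n)) | IsOpen U ∧ μ U = 0} (fun U hU => hU.1)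
  rw [← hTeq]
  exact (measure_sUnion_null_iff hTsub).2 fun s hs => (hTc hs).2

lemma nonempty_inter_measSupport {n : ℕ} {μ : Measure (EuclideanSpace ℝ (Fin n))}
    {G : Set (EuclideanSpace ℝ (Fin n))} (h : μ G ≠ 0) :
    (G ∩ measSupport μ).Nonempty := by
  rcases Set.eq_empty_or_nonempty (G ∩ measSupport μ) with he | hne
  · exfalso
    apply h
    have hsub : G ⊆ (measSupport μ)ᶜ := fun x hx => by
      intro hxs
      exact Set.eq_empty_iff_forall_notMem.1 he x ⟨hx, hxs⟩
    exact measure_mono_null hsub (measure_compl_measSupport μ)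
  · exact hne

lemma bump_aux {n : ℕ} (c : EuclideanSpace ℝ (Fin n)) {s : ℝ} (hs : 0 < s) :
    ∃ f : EuclideanSpace ℝ (Fin n) →ᵇ ℝ, (∀ y, 0 ≤ f y) ∧
      Function.support f = ball c s := by
  have hcont : Continuous fun y : EuclideanSpace ℝ (Fin n) => max 0 (1 - dist y c / s) :=
    continuous_const.max ((continuous_const.sub
      ((continuous_id.dist continuous_const).div_const s)))
  have hle1 : ∀ y : EuclideanSpace ℝ (Fin n), max 0 (1 - dist y c / s) ≤ 1 := by
    intro y
    apply max_le (by norm_num)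
    have : 0 ≤ dist y c / s := div_nonneg dist_nonneg hs.le
    linarith
  refine ⟨BoundedContinuousFunction.mkOfBound ⟨_, hcont⟩ 1 ?_, ?_, ?_⟩
  · intro x y
    simp only [ContinuousMap.coe_mk]
    rw [Real.dist_eq, abs_sub_le_iff]
    constructor
    · have := hle1 x
      have : (0:ℝ) ≤ max 0 (1 - dist y c / s) := le_max_left _ _
      linarith [hle1 x]
    · have : (0:ℝ) ≤ max 0 (1 - dist x c / s) := le_max_left _ _
      linarith [hle1 y]
  · intro y
    exact le_max_left _ _
  · ext y
    simp only [Function.mem_support, mem_ball, BoundedContinuousFunction.mkOfBound_coe,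
      ContinuousMap.coe_mk]
    constructor
    · intro h
      have h0 : (0:ℝ) < max 0 (1 - dist y c / s) :=
        lt_of_le_of_ne (le_max_left _ _) (by simpa using Ne.symm h)
      have h1 : (0:ℝ) < 1 - dist y c / s := by
        rcases lt_max_iff.1 h0 with h | h
        · exact absurd h (lt_irrefl _)
        · exact h
      exact (div_lt_one hs).1 (by linarith)
    · intro h
      have h1 : (0:ℝ) < 1 - dist y c / s :=
        sub_pos.2 ((div_lt_one hs).2 h)
      have : (0:ℝ) < max 0 (1 - dist y c / s) := lt_max_of_lt_right h1
      exact ne_of_gt this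

/-- **Hausdorff convergence of supports (Step 2 of Theorem 3.2).**
Let `B ⊆ ℝⁿ` be compact, `H ⊆ B` compact, and let `μ_j, μ` be nonzero finite Borel measures
supported in `B` with `μ_j → μ` weakly. If there are `ε_j → 0` with
`spt μ_j ⊆ {y : dist(y, spt μ ∪ H) < ε_j}`, then
`d_H(spt μ_j ∪ H, spt μ ∪ H) → 0`. -/
theorem hausdorff_convergence_of_supports (n : ℕ) (B H : Set (EuclideanSpace ℝ (Fin n)))
    (hB : IsCompact B) (hH : IsCompact H) (hHB : H ⊆ B)
    (μs : ℕ → Measure (EuclideanSpace ℝ (Fin n))) (μ : Measure (EuclideanSpace ℝ (Fin n)))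
    [∀ j, IsFiniteMeasure (μs j)] [IsFiniteMeasure μ]
    (hμne : μ ≠ 0) (hμsne : ∀ j, μs j ≠ 0)
    (hsptμ : measSupport μ ⊆ B) (hsptμs : ∀ j, measSupport (μs j) ⊆ B)
    (hconv : ∀ f : EuclideanSpace ℝ (Fin n) →ᵇ ℝ,
      Tendsto (fun j => ∫ x, f x ∂(μs j)) atTop (𝓝 (∫ x, f x ∂μ)))
    (ε : ℕ → ℝ) (hε : Tendsto ε atTop (𝓝 0))
    (hnear : ∀ j, measSupport (μs j) ⊆
      {y : EuclideanSpace ℝ (Fin n) | infDist y (measSupport μ ∪ H) < ε j}) :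
    Tendsto (fun j => hausdorffDist (measSupport (μs j) ∪ H) (measSupport μ ∪ H))
      atTop (𝓝 0) := by
  rw [NormedAddCommGroup.tendsto_nhds_zero]
  intro δ hδ
  have hs4 : 0 < δ / 4 := by linarith
  -- compactness of the support of μ and a finite cover by δ/4-balls
  have hKc : IsCompact (measSupport μ) :=
    hB.of_isClosed_subset (isClosed_measSupport μ) hsptμ
  have hcov : measSupport μ ⊆ ⋃ i ∈ measSupport μ, ball i (δ / 4) := fun x hx =>
    Set.mem_biUnion hx (mem_ball_self hs4)
  obtain ⟨t, hts, htfin, htcov⟩ :=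
    hKc.elim_finite_subcover_image (fun i _ => isOpen_ball) hcov
  have hev1 : ∀ᶠ j in atTop, ε j < δ / 2 :=
    hε.eventually_lt_const (by linarith : (0:ℝ) < δ / 2)
  have hev2 : ∀ᶠ j in atTop, ∀ i ∈ t, (ball i (δ / 4) ∩ measSupport (μs j)).Nonempty := by
    rw [eventually_all_finite htfin]
    intro i hi
    obtain ⟨f, hf0, hfsupp⟩ := bump_aux i hs4
    have hposμ : 0 < ∫ x, f x ∂μ := by
      rw [integral_pos_iff_support_of_nonneg hf0 (f.integrable μ), hfsupp]
      exact (measSupport_measure_ne_zero (hts hi) isOpen_ball (mem_ball_self hs4)).bot_lt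
    have hev : ∀ᶠ j in atTop, 0 < ∫ x, f x ∂(μs j) :=
      (hconv f).eventually_const_lt hposμ
    filter_upwards [hev] with j hj
    have hpos : 0 < (μs j) (ball i (δ / 4)) := by
      have := (integral_pos_iff_support_of_nonneg hf0 (f.integrable (μs j))).1 hj
      rwa [hfsupp] at this
    exact nonempty_inter_measSupport hpos.ne'
  filter_upwards [hev1, hev2] with j h1 h2
  have hhd : hausdorffDist (measSupport (μs j) ∪ H) (measSupport μ ∪ H) ≤ δ / 2 := by
    apply hausdorffDist_le_of_infDist (by linarith)
    · rintro x (hx | hx)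
      · exact ((hnear j hx).trans h1).le
      · rw [infDist_zero_of_mem (Set.mem_union_right _ hx)]; linarith
    · rintro x (hx | hx)
      · obtain ⟨i, hi, hxi⟩ := Set.mem_iUnion₂.1 (htcov hx)
        obtain ⟨z, hzb, hzspt⟩ := h2 i hi
        calc infDist x (measSupport (μs j) ∪ H) ≤ dist x z :=
              infDist_le_dist_of_mem (Set.mem_union_left _ hzspt)
          _ ≤ dist x i + dist i z := dist_triangle _ _ _
          _ ≤ δ / 2 := by
              have h1' : dist x i < δ / 4 := mem_ball.1 hxi
              have h2' : dist i z < δ / 4 := by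
                have := mem_ball.1 hzb
                rw [dist_comm]; exact this
              linarith
      · rw [infDist_zero_of_mem (Set.mem_union_right _ hx)]; linarith
  rw [Real.norm_eq_abs, abs_of_nonneg hausdorffDist_nonneg]
  linarith
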